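/- arXiv:hep-th/0111188 — 2 statements merged into one kernel-verified Lean document; each statement's English description precedes it below -/
import Mathlib

section
/- Let A, B be von Neumann algebras on a Hilbert space H with a unit vector Ω, and let U(a) be a one-parameter unitary group with positive generator such that U(a)Ω = Ω, U(a)AU(a)* = A for all a, and the commutator [U(a)XU(a)*, Y] = 0 for all X ∈ A, Y ∈ B, and a ∈ ℝ. Then for X ∈ A, Y ∈ B, the function a ↦ ⟨Ω, U(a)XU(a)* Y Ω⟩ is constant in a. -/
open scoped InnerProductSpace

/-- `F : ℝ → ℂ` extends to a bounded continuous function on the closed half-plane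
`{z | 0 ≤ σ * z.im}`, holomorphic in its interior, restricting to `F` on `ℝ`. -/
def ExtendsToHalfPlane (σ : ℝ) (F : ℝ → ℂ) : Prop :=
  ∃ G : ℂ → ℂ, ContinuousOn G {z : ℂ | 0 ≤ σ * z.im} ∧
    DifferentiableOn ℂ G {z : ℂ | 0 < σ * z.im} ∧
    (∃ C : ℝ, ∀ z ∈ {z : ℂ | 0 ≤ σ * z.im}, ‖G z‖ ≤ C) ∧
    ∀ x : ℝ, G (x : ℂ) = F x

/-- Spectral characterization of positivity of the self-adjoint generator of a
one-parameter unitary group. -/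
def HasPositiveGenerator {H : Type*} [NormedAddCommGroup H] [InnerProductSpace ℂ H]
    (U : ℝ → H →L[ℂ] H) : Prop :=
  ∀ ξ η : H, ExtendsToHalfPlane 1 (fun a => ⟪ξ, U a η⟫_ℂ)

/-!
Write `F a = ⟪Ω, U a X U (-a) Y Ω⟫`. Moving `Y` to the left (it commutes with the
translate of `X`) and using `U (-a) Ω = Ω` gives `F a = ⟪Y* Ω, U a X Ω⟫`, which extends
boundedly to the upper half-plane since the generator is positive; using instead `U a Ω = Ω`
on the left gives `F a = ⟪X* Ω, U (-a) Y Ω⟫`, which extends boundedly to the lower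
half-plane. The two extensions agree on `ℝ`, so by Morera's theorem they glue to a bounded
entire function, which is constant by Liouville's theorem.
-/

open Complex Set intervalIntegral

namespace Complex

variable {E : Type*} [NormedAddCommGroup E] [NormedSpace ℂ E] {f : ℂ → E}

theorem integral_boundary_rect_eq_zero_of_differentiableOn_im_ne_zero (hc : Continuous f)
    (hd : DifferentiableOn ℂ f {z | z.im ≠ 0}) (z w : ℂ) :
    (∫ x : ℝ in z.re..w.re, f (x + z.im * I)) - (∫ x : ℝ in z.re..w.re, f (x + w.im * I)) +
      I • (∫ y : ℝ in z.im..w.im, f (re w + y * I)) -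
      I • (∫ y : ℝ in z.im..w.im, f (re z + y * I)) = 0 := by
  -- a rectangle with a horizontal side on the real axis has its interior off the axis
  have on_axis : ∀ p q : ℂ, (p.im = 0 ∨ q.im = 0) →
      (∫ x : ℝ in p.re..q.re, f (x + p.im * I)) - (∫ x : ℝ in p.re..q.re, f (x + q.im * I)) +
        I • (∫ y : ℝ in p.im..q.im, f (re q + y * I)) -
        I • (∫ y : ℝ in p.im..q.im, f (re p + y * I)) = 0 := by
    refine fun p q hpq ↦ integral_boundary_rect_eq_zero_of_continuousOn_of_differentiableOn
      f p q hc.continuousOn (hd.mono ?_)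
    rintro u ⟨-, hu⟩
    simp only [mem_preimage, mem_Ioo] at hu
    change u.im ≠ 0
    grind
  have vertical : ∀ x : ℝ, (∫ y : ℝ in z.im..0, f (x + y * I)) +
      (∫ y : ℝ in (0 : ℝ)..w.im, f (x + y * I)) = ∫ y : ℝ in z.im..w.im, f (x + y * I) :=
    fun x ↦ integral_add_adjacent_intervals ((hc.comp (by fun_prop)).intervalIntegrable _ _)
      ((hc.comp (by fun_prop)).intervalIntegrable _ _)
  -- cut the rectangle along the real axis
  have lower := on_axis z w.re (Or.inr (ofReal_im _))
  have upper := on_axis z.re w (Or.inl (ofReal_im _))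
  simp only [ofReal_re, ofReal_im] at lower upper
  rw [← vertical, ← vertical, ← add_zero (0 : E)]
  convert congrArg₂ (· + ·) lower upper using 1
  simp only [ofReal_zero, zero_mul, add_zero, smul_add]
  abel

theorem differentiable_of_differentiableOn_im_ne_zero [CompleteSpace E] (hc : Continuous f)
    (hd : DifferentiableOn ℂ f {z | z.im ≠ 0}) : Differentiable ℂ f := by
  have hcons : IsConservativeOn f univ := fun z w _ ↦ by
    rw [← add_eq_zero_iff_eq_neg, wedgeIntegral_add_wedgeIntegral_eq]
    exact integral_boundary_rect_eq_zero_of_differentiableOn_im_ne_zero hc hd z w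
  exact differentiableOn_univ.1
    ((isConservativeOn_and_continuousOn_iff_isDifferentiableOn isOpen_univ).1
      ⟨hcons, hc.continuousOn⟩)

end Complex

namespace ExtendsToHalfPlane

variable {F : ℝ → ℂ}

theorem comp_neg {σ : ℝ} (h : ExtendsToHalfPlane σ F) :
    ExtendsToHalfPlane (-σ) (F ∘ Neg.neg) := by
  obtain ⟨G, hcont, hdiff, ⟨C, hbound⟩, hreal⟩ := h
  have mem_iff : ∀ (r : ℝ → Prop) (z : ℂ), r (-σ * z.im) ↔ r (σ * (-z).im) := by simp
  refine ⟨G ∘ Neg.neg, hcont.comp continuous_neg.continuousOn fun z ↦ (mem_iff _ z).1,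
    hdiff.comp differentiable_neg.differentiableOn fun z ↦ (mem_iff _ z).1,
    ⟨C, fun z hz ↦ hbound (-z) ((mem_iff _ z).1 hz)⟩, fun x ↦ ?_⟩
  simpa using hreal (-x)

theorem apply_eq_apply (h₁ : ExtendsToHalfPlane 1 F) (h₂ : ExtendsToHalfPlane (-1) F)
    (a b : ℝ) : F a = F b := by
  obtain ⟨G₁, hcont₁, hdiff₁, ⟨C₁, hbound₁⟩, hreal₁⟩ := h₁
  obtain ⟨G₂, hcont₂, hdiff₂, ⟨C₂, hbound₂⟩, hreal₂⟩ := h₂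
  simp only [one_mul, neg_one_mul, neg_nonneg, neg_pos]
    at hcont₁ hdiff₁ hbound₁ hcont₂ hdiff₂ hbound₂
  let G : ℂ → ℂ := fun z ↦ if 0 ≤ z.im then G₁ z else G₂ z
  have hG : ∀ x : ℝ, G x = F x := fun x ↦ by simp [G, hreal₁]
  have hcont : Continuous G := continuous_if_le continuous_const continuous_im hcont₁ hcont₂
    fun z hz ↦ by rw [← re_add_im z, ← hz, ofReal_zero, zero_mul, add_zero, hreal₁, hreal₂]
  have hdiff : Differentiable ℂ G := by
    refine differentiable_of_differentiableOn_im_ne_zero hcont fun z hz ↦ ?_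
    rcases (hz : z.im ≠ 0).lt_or_gt with hneg | hpos
    · have hnhds := (isOpen_lt continuous_im continuous_const).mem_nhds hneg
      refine (hdiff₂.differentiableAt hnhds |>.congr_of_eventuallyEq ?_).differentiableWithinAt
      filter_upwards [hnhds] with w hw using if_neg (not_le.2 hw)
    · have hnhds := (isOpen_lt continuous_const continuous_im).mem_nhds hpos
      refine (hdiff₁.differentiableAt hnhds |>.congr_of_eventuallyEq ?_).differentiableWithinAt
      filter_upwards [hnhds] with w hw using if_pos hw.le
  have hbdd : Bornology.IsBounded (range G) := by
    refine isBounded_iff_forall_norm_le.2 ⟨max C₁ C₂, forall_mem_range.2 fun z ↦ ?_⟩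
    by_cases him : 0 ≤ z.im
    · simpa [G, him] using le_max_of_le_left (hbound₁ z him)
    · simpa [G, him] using le_max_of_le_right (hbound₂ z (not_le.1 him).le)
  rw [← hG a, ← hG b]
  exact hdiff.apply_eq_apply_of_bounded hbdd _ _

end ExtendsToHalfPlane

theorem stmt1_general {H : Type*} [NormedAddCommGroup H] [InnerProductSpace ℂ H] [CompleteSpace H]
    (A B : VonNeumannAlgebra H) (Ω : H)
    (U : ℝ → H →L[ℂ] H)
    (hunitary : ∀ (a : ℝ) (ξ η : H), ⟪U a ξ, U a η⟫_ℂ = ⟪ξ, η⟫_ℂ)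
    (hpos : HasPositiveGenerator U)
    (hΩinv : ∀ a : ℝ, U a Ω = Ω)
    (hcomm : ∀ a : ℝ, ∀ X ∈ A, ∀ Y ∈ B, Commute (U a * X * U (-a)) Y) :
    ∀ X ∈ A, ∀ Y ∈ B, ∀ a b : ℝ,
      ⟪Ω, ((U a * X * U (-a)) * Y) Ω⟫_ℂ = ⟪Ω, ((U b * X * U (-b)) * Y) Ω⟫_ℂ := by
  intro X hX Y hY a b
  set F : ℝ → ℂ := fun c ↦ ⟪Ω, ((U c * X * U (-c)) * Y) Ω⟫_ℂ
  have hF_forward : ∀ c, F c = ⟪star Y Ω, U c (X Ω)⟫_ℂ := fun c ↦ by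
    rw [ContinuousLinearMap.star_eq_adjoint, ContinuousLinearMap.adjoint_inner_left]
    simp only [F, (hcomm c X hX Y hY).eq]
    simp [hΩinv]
  have hF_backward : ∀ c, F c = ⟪star X Ω, U (-c) (Y Ω)⟫_ℂ := fun c ↦ by
    rw [ContinuousLinearMap.star_eq_adjoint, ContinuousLinearMap.adjoint_inner_left,
      ← hunitary c, hΩinv]
    simp [F]
  have hupper : ExtendsToHalfPlane 1 F := by
    simpa only [← hF_forward] using hpos (star Y Ω) (X Ω)
  have hlower : ExtendsToHalfPlane (-1) F := by
    simpa only [Function.comp_def, ← hF_backward] using (hpos (star X Ω) (Y Ω)).comp_neg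
  exact hupper.apply_eq_apply hlower a b

/-- Let `A`, `B` be von Neumann algebras on `H` with a unit vector `Ω`,
and `U` a one-parameter unitary group with positive generator such that `U a Ω = Ω`,
`U a A U a⁻¹ = A`, and translated elements of `A` commute with `B`.  Then for `X ∈ A`,
`Y ∈ B` the function `a ↦ ⟪Ω, U a X U (-a) Y Ω⟫` is constant in `a`. -/
theorem stmt1 {H : Type*} [NormedAddCommGroup H] [InnerProductSpace ℂ H] [CompleteSpace H]
    (A B : VonNeumannAlgebra H) (Ω : H) (hΩ : ‖Ω‖ = 1)
    (U : ℝ → H →L[ℂ] H)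
    (hgroup : ∀ a b : ℝ, U a * U b = U (a + b)) (hone : U 0 = 1)
    (hunitary : ∀ (a : ℝ) (ξ η : H), ⟪U a ξ, U a η⟫_ℂ = ⟪ξ, η⟫_ℂ)
    (hsurj : ∀ a : ℝ, Function.Surjective (U a))
    (hstrongcont : ∀ ξ : H, Continuous fun a : ℝ => U a ξ)
    (hpos : HasPositiveGenerator U)
    (hΩinv : ∀ a : ℝ, U a Ω = Ω)
    (hAinv : ∀ a : ℝ, ∀ X ∈ A, U a * X * U (-a) ∈ A)
    (hcomm : ∀ a : ℝ, ∀ X ∈ A, ∀ Y ∈ B, Commute (U a * X * U (-a)) Y) :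
    ∀ X ∈ A, ∀ Y ∈ B, ∀ a b : ℝ,
      ⟪Ω, ((U a * X * U (-a)) * Y) Ω⟫_ℂ = ⟪Ω, ((U b * X * U (-b)) * Y) Ω⟫_ℂ :=
  stmt1_general A B Ω U hunitary hpos hΩinv hcomm
end

section
/- Let f_δ : ℝ → ℝ be the indicator-like test function equal to 1 on [δ, 1] and 0 outside [0, 1+δ] (smoothly interpolating on intervals of length δ), and let the two-point function of the chiral U(1) current be ⟨j(x)j(y)⟩ = −1/(4π²(x − y − i0)²). Then ⟨j(f_δ), j(f_δ)⟩ = (1/4π²)∬ f_δ′(x) f_δ′(y) · (−log|x−y|) dx dy diverges logarithmically as δ → 0: ⟨j(f_δ), j(f_δ)⟩ = (1/2π²)(−log δ) + O(1). -/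
/-!
Since `fder δ = δ⁻¹ (𝟙[0,δ) - 𝟙[1,1+δ])`, both integrations are elementary: integrating
`log (x - y)` in `y` gives differences of `t log t - t`, and integrating those in `x` gives
differences of the even function `t² / 2 · log t - 3/4 · t²`. The result is the exact identity
`4π² ⟨j(f_δ), j(f_δ)⟩ = -2 log δ + ((1 + δ)² log (1 + δ) + (1 - δ)² log (1 - δ)) / δ²`,
and the last quotient lies in `[2, 4]` by `1 - x⁻¹ ≤ log x ≤ x - 1`.
-/

open MeasureTheory Real

/-- The (distributional) derivative of the indicator-like test function `f_δ` which
is `0` outside `[0, 1+δ]`, rises linearly from `0` to `1` on `[0, δ]`, equals `1` on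
`[δ, 1]` and falls linearly back to `0` on `[1, 1+δ]`. -/
noncomputable def fder (δ : ℝ) (x : ℝ) : ℝ :=
  if x ∈ Set.Ico (0 : ℝ) δ then 1 / δ
  else if x ∈ Set.Icc (1 : ℝ) (1 + δ) then -(1 / δ) else 0

/-- The current two-point form `⟨j(f_δ), j(f_δ)⟩` for the chiral `U(1)` current with
`⟨j(x)j(y)⟩ = −1/(4π²(x − y − i0)²)`, rewritten after integration by parts as
`(1/4π²) ∬ f_δ′(x) f_δ′(y) (−log|x − y|) dx dy`. -/
noncomputable def currentNorm (δ : ℝ) : ℝ :=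
  (1 / (4 * π ^ 2)) *
    ∫ x : ℝ, ∫ y : ℝ, fder δ x * fder δ y * (-Real.log |x - y|)

open Set intervalIntegral

noncomputable def logAntideriv (t : ℝ) : ℝ := t * log t - t

noncomputable def logAntideriv₂ (t : ℝ) : ℝ := t ^ 2 / 2 * log t - 3 / 4 * t ^ 2

lemma continuous_logAntideriv : Continuous logAntideriv :=
  continuous_mul_log.sub continuous_id

lemma continuous_logAntideriv₂ : Continuous logAntideriv₂ := by
  have h : logAntideriv₂ = fun t ↦ t / 2 * (t * log t) - 3 / 4 * t ^ 2 := by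
    funext t; simp only [logAntideriv₂]; ring
  rw [h]
  fun_prop

@[simp]
lemma logAntideriv₂_neg (t : ℝ) : logAntideriv₂ (-t) = logAntideriv₂ t := by
  simp [logAntideriv₂]

lemma hasDerivAt_logAntideriv₂ {x : ℝ} (hx : x ≠ 0) :
    HasDerivAt logAntideriv₂ (logAntideriv x) x := by
  refine ((((hasDerivAt_pow 2 x).div_const 2).mul (hasDerivAt_log hx)).sub
    ((hasDerivAt_pow 2 x).const_mul (3 / 4 : ℝ))).congr_deriv ?_
  rw [logAntideriv]
  field_simp
  ring

lemma integral_log_eq_logAntideriv (a b : ℝ) :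
    ∫ t in a..b, log t = logAntideriv b - logAntideriv a := by
  rw [integral_log, logAntideriv, logAntideriv]
  ring

lemma integral_logAntideriv (a b : ℝ) :
    ∫ t in a..b, logAntideriv t = logAntideriv₂ b - logAntideriv₂ a :=
  integral_eq_of_hasDerivAt_off_countable _ _ (countable_singleton 0)
    continuous_logAntideriv₂.continuousOn
    (fun _ hx ↦ hasDerivAt_logAntideriv₂ hx.2)
    (continuous_logAntideriv.intervalIntegrable a b)

lemma integral_log_sub (x a b : ℝ) :
    ∫ y in a..b, log (x - y) = logAntideriv (x - a) - logAntideriv (x - b) := by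
  rw [integral_comp_sub_left (fun t ↦ log t) x, integral_log_eq_logAntideriv]

lemma fder_eq_indicator {δ : ℝ} (hδ1 : δ < 1) :
    fder δ =
      (Ico 0 δ).indicator (fun _ ↦ 1 / δ) + (Icc 1 (1 + δ)).indicator (fun _ ↦ -(1 / δ)) := by
  funext y
  by_cases h₀ : y ∈ Ico 0 δ
  · have h₁ : y ∉ Icc 1 (1 + δ) := fun h₁ ↦ by linarith [h₀.2, h₁.1]
    simp [fder, h₀, h₁]
  · by_cases h₁ : y ∈ Icc 1 (1 + δ) <;> simp [fder, h₀, h₁]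

lemma integral_fder_mul {δ : ℝ} (hδ : 0 ≤ δ) (hδ1 : δ < 1) {g : ℝ → ℝ}
    (h₀ : IntervalIntegrable g volume 0 δ) (h₁ : IntervalIntegrable g volume 1 (1 + δ)) :
    ∫ y, fder δ y * g y = ((∫ y in 0..δ, g y) - ∫ y in 1..1 + δ, g y) / δ := by
  rw [intervalIntegrable_iff_integrableOn_Icc_of_le hδ] at h₀
  rw [intervalIntegrable_iff_integrableOn_Icc_of_le (by linarith)] at h₁
  simp_rw [fder_eq_indicator hδ1, Pi.add_apply, add_mul, ← indicator_mul_left]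
  rw [integral_add
      (IntegrableOn.integrable_indicator ((h₀.mono_set Ico_subset_Icc_self).const_mul _)
        measurableSet_Ico)
      (IntegrableOn.integrable_indicator (h₁.const_mul _) measurableSet_Icc),
    MeasureTheory.integral_indicator measurableSet_Ico,
    MeasureTheory.integral_indicator measurableSet_Icc,
    integral_Ico_eq_integral_Ioc, integral_Icc_eq_integral_Ioc, MeasureTheory.integral_const_mul,
    MeasureTheory.integral_const_mul, ← integral_of_le hδ, ← integral_of_le (by linarith)]
  ring

/-- `stepDiff δ H / δ` is the convolution of `fder δ` with `H'`. -/
noncomputable def stepDiff (δ : ℝ) (h : ℝ → ℝ) (x : ℝ) : ℝ :=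
  h x - h (x - δ) - h (x - 1) + h (x - (1 + δ))

lemma continuous_stepDiff {h : ℝ → ℝ} (hh : Continuous h) (δ : ℝ) :
    Continuous (stepDiff δ h) := by
  unfold stepDiff
  fun_prop

lemma integral_stepDiff {h H : ℝ → ℝ} (hh : Continuous h)
    (hH : ∀ a b, ∫ x in a..b, h x = H b - H a) (δ a b : ℝ) :
    ∫ x in a..b, stepDiff δ h x = stepDiff δ H b - stepDiff δ H a := by
  have hshift : ∀ s, ∫ x in a..b, h (x - s) = H (b - s) - H (a - s) := fun s ↦ by
    rw [integral_comp_sub_right h s, hH]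
  have hint : ∀ s, IntervalIntegrable (fun x ↦ h (x - s)) volume a b := fun s ↦
    (hh.comp (continuous_sub_right s)).intervalIntegrable a b
  have hint₀ : IntervalIntegrable h volume a b := hh.intervalIntegrable a b
  unfold stepDiff
  rw [integral_add ((hint₀.sub (hint _)).sub (hint _)) (hint _),
    integral_sub (hint₀.sub (hint _)) (hint _), integral_sub hint₀ (hint _),
    hH, hshift, hshift, hshift]
  ring

lemma integral_fder_mul_log_sub {δ : ℝ} (hδ : 0 ≤ δ) (hδ1 : δ < 1) (x : ℝ) :
    ∫ y, fder δ y * log (x - y) = stepDiff δ logAntideriv x / δ := by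
  have hint : ∀ a b, IntervalIntegrable (fun y ↦ log (x - y)) volume a b := fun a b ↦ by
    simpa using (intervalIntegrable_log' (a := x - a) (b := x - b)).comp_sub_left x
  rw [integral_fder_mul hδ hδ1 (hint _ _) (hint _ _), integral_log_sub, integral_log_sub,
    stepDiff, sub_zero]
  ring

lemma stepDiff_logAntideriv₂_eval (δ : ℝ) :
    stepDiff δ logAntideriv₂ δ - stepDiff δ logAntideriv₂ 0
      - (stepDiff δ logAntideriv₂ (1 + δ) - stepDiff δ logAntideriv₂ 1)
      = 2 * δ ^ 2 * log δ - ((1 + δ) ^ 2 * log (1 + δ) + (1 - δ) ^ 2 * log (1 - δ)) := by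
  simp only [stepDiff, sub_self, zero_sub, add_sub_cancel_right, add_sub_cancel_left,
    sub_add_cancel_right, sub_add_cancel_left, logAntideriv₂_neg, ← neg_sub (1 : ℝ) δ]
  simp only [logAntideriv₂, log_one, log_zero]
  ring

lemma currentNorm_eq {δ : ℝ} (hδ : 0 < δ) (hδ1 : δ < 1) :
    currentNorm δ = 1 / (2 * π ^ 2) * -log δ
      + ((1 + δ) ^ 2 * log (1 + δ) + (1 - δ) ^ 2 * log (1 - δ)) / (4 * π ^ 2 * δ ^ 2) := by
  have hinner : ∀ x, ∫ y, fder δ x * fder δ y * -log |x - y|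
      = -(fder δ x * (stepDiff δ logAntideriv x / δ)) := fun x ↦ by
    simp_rw [log_abs, mul_assoc (fder δ x), mul_neg, MeasureTheory.integral_neg,
      MeasureTheory.integral_const_mul, integral_fder_mul_log_sub hδ.le hδ1]
  have hcont : Continuous fun x ↦ stepDiff δ logAntideriv x / δ :=
    (continuous_stepDiff continuous_logAntideriv δ).div_const δ
  have houter : ∀ a b, ∫ x in a..b, stepDiff δ logAntideriv x / δ
      = (stepDiff δ logAntideriv₂ b - stepDiff δ logAntideriv₂ a) / δ := fun a b ↦ by
    rw [intervalIntegral.integral_div,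
      integral_stepDiff continuous_logAntideriv integral_logAntideriv]
  rw [currentNorm]
  simp_rw [hinner]
  rw [MeasureTheory.integral_neg, integral_fder_mul hδ.le hδ1 (hcont.intervalIntegrable _ _)
      (hcont.intervalIntegrable _ _), houter, houter, div_sub_div_same,
    stepDiff_logAntideriv₂_eval]
  field_simp
  ring

lemma sq_mul_log_one_add_add_sq_mul_log_one_sub_mem_Icc {δ : ℝ} (hδ : 0 ≤ δ)
    (hδ1 : δ < 1) :
    (1 + δ) ^ 2 * log (1 + δ) + (1 - δ) ^ 2 * log (1 - δ)
      ∈ Icc (2 * δ ^ 2) (4 * δ ^ 2) := by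
  have hp : 0 < 1 + δ := by linarith
  have hm : 0 < 1 - δ := by linarith
  have hp_le : (1 + δ) ^ 2 * log (1 + δ) ≤ (1 + δ) ^ 2 * δ := by
    have := log_le_sub_one_of_pos hp
    gcongr
    linarith
  have hm_le : (1 - δ) ^ 2 * log (1 - δ) ≤ (1 - δ) ^ 2 * -δ := by
    have := log_le_sub_one_of_pos hm
    gcongr
    linarith
  have hp_ge : (1 + δ) ^ 2 * (1 - (1 + δ)⁻¹) ≤ (1 + δ) ^ 2 * log (1 + δ) := by
    gcongr
    exact one_sub_inv_le_log_of_pos hp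
  have hm_ge : (1 - δ) ^ 2 * (1 - (1 - δ)⁻¹) ≤ (1 - δ) ^ 2 * log (1 - δ) := by
    gcongr
    exact one_sub_inv_le_log_of_pos hm
  have hp_eq : (1 + δ) ^ 2 * (1 - (1 + δ)⁻¹) = (1 + δ) * δ := by field_simp; ring
  have hm_eq : (1 - δ) ^ 2 * (1 - (1 - δ)⁻¹) = -((1 - δ) * δ) := by field_simp; ring
  constructor <;> nlinarith

/-- `⟨j(f_δ), j(f_δ)⟩` diverges logarithmically as `δ → 0`:
`⟨j(f_δ), j(f_δ)⟩ = (1/2π²)(−log δ) + O(1)`. -/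
theorem stmt11 :
    ∃ C : ℝ, ∀ δ ∈ Set.Ioo (0 : ℝ) (1 / 2),
      |currentNorm δ - (1 / (2 * π ^ 2)) * (-Real.log δ)| ≤ C := by
  refine ⟨1 / π ^ 2, fun δ ⟨hδ, hδ2⟩ ↦ ?_⟩
  obtain ⟨hlow, hhigh⟩ :=
    sq_mul_log_one_add_add_sq_mul_log_one_sub_mem_Icc hδ.le (by linarith : δ < 1)
  rw [currentNorm_eq hδ (by linarith), add_sub_cancel_left,
    abs_of_nonneg (div_nonneg (by nlinarith) (by positivity)),
    div_le_div_iff₀ (by positivity) (by positivity)]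
  nlinarith [mul_le_mul_of_nonneg_right hhigh (sq_nonneg π)]
end
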